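/- arXiv:1509.00302 — 7 statements merged into one kernel-verified Lean document; each statement's English description precedes it below -/
import Mathlib

section
/- The matrix T constructed from T^+ and T^- satisfying skew detailed balance is a Markov transition matrix: all entries are nonnegative and all row sums equal 1. -/
open Finset

/-!
Every entry of `T` off the diagonal of `S × Bool` is a given nonnegative rate, a flip rate
`max 0 (…)`, or `0`, so only the diagonal needs an argument. With `a = ∑_{y ≠ x} T⁺(x,y)`
and `b = ∑_{y ≠ x} T⁻(x,y)`, both at most `1`, we have `T⁺(x,x) = 1 - max 0 (b - a) - a ≥ 0`
because `max 0 (b - a) + a = max a b ≤ 1`, and symmetrically for `T⁻`. The diagonal is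
chosen exactly so that each row sums to `1`, the only nonzero entry in the opposite block
being the flip rate.
-/

section Rates

variable {α : Type*} [AddCommGroup α] [LinearOrder α] [IsOrderedAddMonoid α]

theorem sub_max_zero_sub_sub_nonneg {a b c : α} (ha : a ≤ c) (hb : b ≤ c) :
    0 ≤ c - max 0 (b - a) - a := by
  have hmax : max 0 (b - a) ≤ c - a := max_le (sub_nonneg.2 ha) (sub_le_sub_right hb a)
  rwa [sub_sub, sub_nonneg, ← le_sub_iff_add_le]

end Rates

section Rows

variable {S M : Type*} [Fintype S] [AddCommMonoid M]

theorem Fintype.sum_prod_bool_eq_of_eq_zero (g : S × Bool → M) (x : S) (b : Bool)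
    (hg : ∀ y, y ≠ x → g (y, !b) = 0) :
    ∑ w, g w = ∑ y, g (y, b) + g (x, !b) := by
  rw [Fintype.sum_prod_type_right, Fintype.sum_bool]
  cases b <;> simp only [Bool.not_true, Bool.not_false] at hg ⊢ <;>
    rw [Fintype.sum_eq_single x hg]
  exact add_comm _ _

theorem Fintype.sum_add_eq_one_of_eq_sub [DecidableEq S] {p : S → ℝ} {x : S} {f : ℝ}
    (hx : p x = 1 - f - ∑ y ∈ univ.erase x, p y) :
    ∑ y, p y + f = 1 := by
  rw [← add_sum_erase _ _ (mem_univ x), hx]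
  ring

end Rows

/-- The direction `+1` is encoded by `true` and `-1` by `false`. -/
theorem lifted_matrix_is_stochastic_general
    {S : Type*} [Fintype S] [DecidableEq S]
    (Tp Tm : S → S → ℝ)
    (hTp_nn : ∀ x y, x ≠ y → 0 ≤ Tp x y) (hTm_nn : ∀ x y, x ≠ y → 0 ≤ Tm x y)
    (hTp_sub : ∀ x, ∑ y ∈ Finset.univ.erase x, Tp x y ≤ 1)
    (hTm_sub : ∀ x, ∑ y ∈ Finset.univ.erase x, Tm x y ≤ 1)
    (Tmp Tpm : S → ℝ)
    (hTmp : ∀ x, Tmp x = max 0 (∑ y ∈ Finset.univ.erase x, (Tp x y - Tm x y)))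
    (hTpm : ∀ x, Tpm x = max 0 (∑ y ∈ Finset.univ.erase x, (Tm x y - Tp x y)))
    (hTp_diag : ∀ x, Tp x x = 1 - Tpm x - ∑ y ∈ Finset.univ.erase x, Tp x y)
    (hTm_diag : ∀ x, Tm x x = 1 - Tmp x - ∑ y ∈ Finset.univ.erase x, Tm x y)
    (T : S × Bool → S × Bool → ℝ)
    (hT_pp : ∀ x y, T (x, true) (y, true) = Tp x y)
    (hT_mm : ∀ x y, T (x, false) (y, false) = Tm x y)
    (hT_pm : ∀ x, T (x, true) (x, false) = Tpm x)
    (hT_mp : ∀ x, T (x, false) (x, true) = Tmp x)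
    (hT_pm0 : ∀ x y, x ≠ y → T (x, true) (y, false) = 0)
    (hT_mp0 : ∀ x y, x ≠ y → T (x, false) (y, true) = 0) :
    (∀ z w : S × Bool, 0 ≤ T z w) ∧ (∀ z : S × Bool, ∑ w : S × Bool, T z w = 1) := by
  have hTp_diag_nn (x : S) : 0 ≤ Tp x x := by
    rw [hTp_diag, hTpm, sum_sub_distrib]
    exact sub_max_zero_sub_sub_nonneg (hTp_sub x) (hTm_sub x)
  have hTm_diag_nn (x : S) : 0 ≤ Tm x x := by
    rw [hTm_diag, hTmp, sum_sub_distrib]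
    exact sub_max_zero_sub_sub_nonneg (hTm_sub x) (hTp_sub x)
  constructor
  · rintro ⟨x, _ | _⟩ ⟨y, _ | _⟩ <;> obtain rfl | hxy := eq_or_ne x y
    · exact hT_mm x x ▸ hTm_diag_nn x
    · exact hT_mm x y ▸ hTm_nn x y hxy
    · exact hT_mp x ▸ hTmp x ▸ le_max_left _ _
    · exact (hT_mp0 x y hxy).ge
    · exact hT_pm x ▸ hTpm x ▸ le_max_left _ _
    · exact (hT_pm0 x y hxy).ge
    · exact hT_pp x x ▸ hTp_diag_nn x
    · exact hT_pp x y ▸ hTp_nn x y hxy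
  · rintro ⟨x, _ | _⟩
    · rw [Fintype.sum_prod_bool_eq_of_eq_zero _ x false fun y hy ↦ hT_mp0 x y hy.symm]
      simpa only [hT_mm, Bool.not_false, hT_mp]
        using Fintype.sum_add_eq_one_of_eq_sub (hTm_diag x)
    · rw [Fintype.sum_prod_bool_eq_of_eq_zero _ x true fun y hy ↦ hT_pm0 x y hy.symm]
      simpa only [hT_pp, Bool.not_true, hT_pm]
        using Fintype.sum_add_eq_one_of_eq_sub (hTp_diag x)

/-- The lifted matrix `T` constructed from `T⁺`, `T⁻` satisfying skew detailed balance
is a Markov transition matrix: all entries nonnegative, all row sums equal 1.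
Here the direction `+1` is encoded by `true` and `-1` by `false`. -/
theorem lifted_matrix_is_stochastic
    {S : Type*} [Fintype S] [DecidableEq S]
    (π : S → ℝ) (hπpos : ∀ x, 0 < π x) (hπsum : ∑ x, π x = 1)
    (Tp Tm : S → S → ℝ)
    (hTp_nn : ∀ x y, x ≠ y → 0 ≤ Tp x y) (hTm_nn : ∀ x y, x ≠ y → 0 ≤ Tm x y)
    (hTp_sub : ∀ x, ∑ y ∈ Finset.univ.erase x, Tp x y ≤ 1)
    (hTm_sub : ∀ x, ∑ y ∈ Finset.univ.erase x, Tm x y ≤ 1)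
    (hskew : ∀ x y, x ≠ y → π x * Tp x y = π y * Tm y x)
    (Tmp Tpm : S → ℝ)
    (hTmp : ∀ x, Tmp x = max 0 (∑ y ∈ Finset.univ.erase x, (Tp x y - Tm x y)))
    (hTpm : ∀ x, Tpm x = max 0 (∑ y ∈ Finset.univ.erase x, (Tm x y - Tp x y)))
    (hTp_diag : ∀ x, Tp x x = 1 - Tpm x - ∑ y ∈ Finset.univ.erase x, Tp x y)
    (hTm_diag : ∀ x, Tm x x = 1 - Tmp x - ∑ y ∈ Finset.univ.erase x, Tm x y)
    (T : S × Bool → S × Bool → ℝ)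
    (hT_pp : ∀ x y, T (x, true) (y, true) = Tp x y)
    (hT_mm : ∀ x y, T (x, false) (y, false) = Tm x y)
    (hT_pm : ∀ x, T (x, true) (x, false) = Tpm x)
    (hT_mp : ∀ x, T (x, false) (x, true) = Tmp x)
    (hT_pm0 : ∀ x y, x ≠ y → T (x, true) (y, false) = 0)
    (hT_mp0 : ∀ x y, x ≠ y → T (x, false) (y, true) = 0) :
    (∀ z w : S × Bool, 0 ≤ T z w) ∧ (∀ z : S × Bool, ∑ w : S × Bool, T z w = 1) :=
  lifted_matrix_is_stochastic_general Tp Tm hTp_nn hTm_nn hTp_sub hTm_sub Tmp Tpm hTmp hTpm hTp_diag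
    hTm_diag T hT_pp hT_mm hT_pm hT_mp hT_pm0 hT_mp0
end

section
/- The lifted transition matrix T has invariant distribution (1/2)(π,π) on S×{-1,+1}; that is, for all (y,k) in S×{-1,+1}, ∑_{(x,j)} (1/2)π(x) T((x,j),(y,k)) = (1/2)π(y). -/
/-!
Fix a target state `(y, k)`. The probability flowing into it along its own direction `k`
is `∑ₓ π x T^k(x, y)`; by skew detailed balance the off-diagonal part equals `π y` times the
total off-diagonal rate of the opposite direction out of `y`, so the column sum differs from
`π y` only by the imbalance `∑ (T^k - T^{-k})(y, ·)`. The flip rates are `max 0 (±imbalance)`,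
so their difference is exactly this imbalance; hence the mass entering by a direction flip at
`y` closes the gap, and `(π, π)` is invariant.
-/

open Finset

lemma max_zero_sum_sub_sub_max_zero_sum_sub {ι : Type*} (s : Finset ι) (f g : ι → ℝ) :
    max 0 (∑ i ∈ s, (f i - g i)) - max 0 (∑ i ∈ s, (g i - f i)) =
      ∑ i ∈ s, f i - ∑ i ∈ s, g i := by
  rw [sum_sub_distrib, sum_sub_distrib, ← neg_sub (∑ i ∈ s, f i), max_comm 0, max_comm 0,
    max_zero_sub_max_neg_zero_eq_self]

section Column

variable {S : Type*} [Fintype S]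

theorem sum_mul_add_mul_eq_of_skew_balance [DecidableEq S] (π : S → ℝ) (A B : S → S → ℝ)
    (c d : S → ℝ) (hskew : ∀ x y, x ≠ y → π x * A x y = π y * B y x) (y : S)
    (hdiag : A y y = 1 - c y - ∑ x ∈ univ.erase y, A y x)
    (hflip : d y - c y = ∑ x ∈ univ.erase y, A y x - ∑ x ∈ univ.erase y, B y x) :
    ∑ x, π x * A x y + π y * d y = π y := by
  have hoff : ∑ x ∈ univ.erase y, π x * A x y = π y * ∑ x ∈ univ.erase y, B y x := by
    rw [mul_sum]
    exact sum_congr rfl fun x hx => hskew x y (ne_of_mem_erase hx)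
  rw [← sum_erase_add univ _ (mem_univ y), hoff, hdiag]
  linear_combination π y * hflip

theorem sum_prod_bool_mul_eq_of_column_balance (π : S → ℝ)
    (T : S × Bool → S × Bool → ℝ) (A : S → S → ℝ) (d : S → ℝ) (y : S) (k : Bool)
    (hsame : ∀ x, T (x, k) (y, k) = A x y) (hflip : T (y, !k) (y, k) = d y)
    (hflip0 : ∀ x, x ≠ y → T (x, !k) (y, k) = 0)
    (hcol : ∑ x, π x * A x y + π y * d y = π y) :
    ∑ z : S × Bool, π z.1 * T z (y, k) = π y := by
  have hflipSum : ∑ x, π x * T (x, !k) (y, k) = π y * d y := by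
    rw [Fintype.sum_eq_single y fun x hx => by rw [hflip0 x hx, mul_zero], hflip]
  have hsameSum : ∑ x, π x * T (x, k) (y, k) = ∑ x, π x * A x y := by simp only [hsame]
  rw [Fintype.sum_prod_type_right, ← hcol, ← hflipSum, ← hsameSum]
  cases k
  · exact (Fintype.sum_bool _).trans (add_comm _ _)
  · exact Fintype.sum_bool _

end Column

theorem lifted_matrix_invariant_general
    {S : Type*} [Fintype S] [DecidableEq S]
    (π : S → ℝ)
    (Tp Tm : S → S → ℝ)
    (hskew : ∀ x y, x ≠ y → π x * Tp x y = π y * Tm y x)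
    (Tmp Tpm : S → ℝ)
    (hTmp : ∀ x, Tmp x = max 0 (∑ y ∈ Finset.univ.erase x, (Tp x y - Tm x y)))
    (hTpm : ∀ x, Tpm x = max 0 (∑ y ∈ Finset.univ.erase x, (Tm x y - Tp x y)))
    (hTp_diag : ∀ x, Tp x x = 1 - Tpm x - ∑ y ∈ Finset.univ.erase x, Tp x y)
    (hTm_diag : ∀ x, Tm x x = 1 - Tmp x - ∑ y ∈ Finset.univ.erase x, Tm x y)
    (T : S × Bool → S × Bool → ℝ)
    (hT_pp : ∀ x y, T (x, true) (y, true) = Tp x y)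
    (hT_mm : ∀ x y, T (x, false) (y, false) = Tm x y)
    (hT_pm : ∀ x, T (x, true) (x, false) = Tpm x)
    (hT_mp : ∀ x, T (x, false) (x, true) = Tmp x)
    (hT_pm0 : ∀ x y, x ≠ y → T (x, true) (y, false) = 0)
    (hT_mp0 : ∀ x y, x ≠ y → T (x, false) (y, true) = 0) :
    ∀ w : S × Bool, ∑ z : S × Bool, (1 / 2 * π z.1) * T z w = 1 / 2 * π w.1 := by
  rintro ⟨y, k⟩
  simp only [mul_assoc, ← mul_sum]
  congr 1
  have hskew_symm : ∀ x y, x ≠ y → π x * Tm x y = π y * Tp y x :=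
    fun x y hxy => (hskew y x hxy.symm).symm
  cases k
  · refine sum_prod_bool_mul_eq_of_column_balance π T Tm Tpm y false (hT_mm · y) (hT_pm y)
      (hT_pm0 · y) (sum_mul_add_mul_eq_of_skew_balance π Tm Tp Tmp Tpm
        hskew_symm y (hTm_diag y) ?_)
    rw [hTpm, hTmp, max_zero_sum_sub_sub_max_zero_sum_sub]
  · refine sum_prod_bool_mul_eq_of_column_balance π T Tp Tmp y true (hT_pp · y) (hT_mp y)
      (hT_mp0 · y) (sum_mul_add_mul_eq_of_skew_balance π Tp Tm Tpm Tmp hskew y (hTp_diag y) ?_)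
    rw [hTmp, hTpm, max_zero_sum_sub_sub_max_zero_sum_sub]

/-- The lifted matrix `T` has invariant distribution `(1/2)(π,π)` on `S × {-1,+1}`:
for every state `(y,k)`, `∑_{(x,j)} (1/2)π(x) T((x,j),(y,k)) = (1/2)π(y)`.
Direction `+1` is encoded by `true` and `-1` by `false`. -/
theorem lifted_matrix_invariant
    {S : Type*} [Fintype S] [DecidableEq S]
    (π : S → ℝ) (hπpos : ∀ x, 0 < π x) (hπsum : ∑ x, π x = 1)
    (Tp Tm : S → S → ℝ)
    (hTp_nn : ∀ x y, x ≠ y → 0 ≤ Tp x y) (hTm_nn : ∀ x y, x ≠ y → 0 ≤ Tm x y)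
    (hTp_sub : ∀ x, ∑ y ∈ Finset.univ.erase x, Tp x y ≤ 1)
    (hTm_sub : ∀ x, ∑ y ∈ Finset.univ.erase x, Tm x y ≤ 1)
    (hskew : ∀ x y, x ≠ y → π x * Tp x y = π y * Tm y x)
    (Tmp Tpm : S → ℝ)
    (hTmp : ∀ x, Tmp x = max 0 (∑ y ∈ Finset.univ.erase x, (Tp x y - Tm x y)))
    (hTpm : ∀ x, Tpm x = max 0 (∑ y ∈ Finset.univ.erase x, (Tm x y - Tp x y)))
    (hTp_diag : ∀ x, Tp x x = 1 - Tpm x - ∑ y ∈ Finset.univ.erase x, Tp x y)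
    (hTm_diag : ∀ x, Tm x x = 1 - Tmp x - ∑ y ∈ Finset.univ.erase x, Tm x y)
    (T : S × Bool → S × Bool → ℝ)
    (hT_pp : ∀ x y, T (x, true) (y, true) = Tp x y)
    (hT_mm : ∀ x y, T (x, false) (y, false) = Tm x y)
    (hT_pm : ∀ x, T (x, true) (x, false) = Tpm x)
    (hT_mp : ∀ x, T (x, false) (x, true) = Tmp x)
    (hT_pm0 : ∀ x y, x ≠ y → T (x, true) (y, false) = 0)
    (hT_mp0 : ∀ x y, x ≠ y → T (x, false) (y, true) = 0) :
    ∀ w : S × Bool, ∑ z : S × Bool, (1 / 2 * π z.1) * T z w = 1 / 2 * π w.1 :=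
  lifted_matrix_invariant_general π Tp Tm hskew Tmp Tpm hTmp hTpm hTp_diag hTm_diag T hT_pp hT_mm
    hT_pm hT_mp hT_pm0 hT_mp0
end

section
/- For 0 ≤ β < 1 and h ∈ ℝ, the function i(m) = -((1/2)βm² + βhm) + ((1-m)/2)log(1-m) + ((1+m)/2)log(1+m) on (-1,1) has a unique global minimizer m₀, and m₀ satisfies m₀ = tanh(β(m₀ + h)). -/
/-!
The derivative of the rate function is `i'(m) = artanh m - β (m + h)`, whose own derivative
`1 / (1 - m²) - β ≥ 1 - β` is positive, so `i'` is strictly increasing on `(-1, 1)`. Hence `i`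
has at most one critical point, and it is a strict global minimizer. Critical points are exactly
the solutions of `m = tanh (β (m + h))`, and one exists by the intermediate value theorem,
because `tanh` takes values in `(-1, 1)`.
-/

open Set Real

namespace Real

@[fun_prop]
theorem continuous_tanh : Continuous tanh := by
  simp_rw [funext tanh_eq_sinh_div_cosh]
  exact continuous_sinh.div continuous_cosh fun x => (cosh_pos x).ne'

theorem hasDerivAt_artanh {x : ℝ} (hx : x ∈ Ioo (-1) 1) :
    HasDerivAt artanh (1 - x ^ 2)⁻¹ x := by
  have h₁ : 0 < 1 + x := by linarith [hx.1]
  have h₂ : 0 < 1 - x := by linarith [hx.2]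
  have hlog := ((((hasDerivAt_id x).const_add 1).log h₁.ne').sub
      (((hasDerivAt_id x).const_sub 1).log h₂.ne')).div_const 2
  have heq : artanh =ᶠ[nhds x] fun y => (log (1 + y) - log (1 - y)) / 2 := by
    filter_upwards [isOpen_Ioo.mem_nhds hx] with y hy
    rw [artanh_eq_half_log (Ioo_subset_Icc_self hy),
      log_div (by linarith [hy.1]) (by linarith [hy.2])]
    ring
  refine (hlog.congr_of_eventuallyEq heq).congr_deriv ?_
  rw [show 1 - x ^ 2 = (1 + x) * (1 - x) by ring]
  simp only [id]
  field_simp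
  ring

theorem exists_eq_tanh_mul_add (β h : ℝ) : ∃ m, m = tanh (β * (m + h)) := by
  have hcont : ContinuousOn (fun m => tanh (β * (m + h)) - m) (Icc (-1) 1) := by
    fun_prop
  obtain ⟨m, -, hm⟩ := intermediate_value_Icc' (by norm_num) hcont
    (show (0 : ℝ) ∈ Icc _ _ from
      ⟨by linarith [tanh_lt_one (β * (1 + h))], by linarith [neg_one_lt_tanh (β * (-1 + h))]⟩)
  exact ⟨m, (sub_eq_zero.mp hm).symm⟩

end Real

theorem StrictMonoOn.lt_of_hasDerivAt_eq_zero {s : Set ℝ} (hs : s.OrdConnected) {f f' : ℝ → ℝ}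
    (hf : ∀ x ∈ s, HasDerivAt f (f' x) x) (hf' : StrictMonoOn f' s) {x₀ y : ℝ} (hx₀ : x₀ ∈ s)
    (hy : y ∈ s) (h₀ : f' x₀ = 0) (hne : y ≠ x₀) : f x₀ < f y := by
  have mean_value : ∀ {a b}, a ∈ s → b ∈ s → a < b →
      ∃ c ∈ Ioo a b, c ∈ s ∧ f' c * (b - a) = f b - f a := by
    intro a b ha hb hab
    have hsub : Icc a b ⊆ s := hs.out ha hb
    obtain ⟨c, hc, hslope⟩ := exists_hasDerivAt_eq_slope f f' hab
      (fun x hx => (hf x (hsub hx)).continuousAt.continuousWithinAt)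
      (fun x hx => hf x (hsub (Ioo_subset_Icc_self hx)))
    refine ⟨c, hc, hsub (Ioo_subset_Icc_self hc), ?_⟩
    rw [hslope, div_mul_cancel₀ _ (sub_pos.mpr hab).ne']
  rcases hne.lt_or_gt with hlt | hgt
  · obtain ⟨c, hc, hcs, hslope⟩ := mean_value hy hx₀ hlt
    have : f' c < 0 := h₀ ▸ hf' hcs hx₀ hc.2
    nlinarith
  · obtain ⟨c, hc, hcs, hslope⟩ := mean_value hx₀ hy hgt
    have : 0 < f' c := h₀ ▸ hf' hx₀ hcs hc.1
    nlinarith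

noncomputable def curieWeissRate (β h m : ℝ) : ℝ :=
  -((1 / 2) * β * m ^ 2 + β * h * m) + ((1 - m) / 2) * log (1 - m)
    + ((1 + m) / 2) * log (1 + m)

theorem hasDerivAt_curieWeissRate (β h : ℝ) {m : ℝ} (hm : m ∈ Ioo (-1) 1) :
    HasDerivAt (curieWeissRate β h) (artanh m - β * (m + h)) m := by
  have h₁ : 0 < 1 + m := by linarith [hm.1]
  have h₂ : 0 < 1 - m := by linarith [hm.2]
  have hd := ((((hasDerivAt_pow 2 m).const_mul (1 / 2 * β)).add
      ((hasDerivAt_id m).const_mul (β * h))).neg.add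
    ((((hasDerivAt_id m).const_sub 1).div_const 2).mul
      (((hasDerivAt_id m).const_sub 1).log h₂.ne'))).add
    ((((hasDerivAt_id m).const_add 1).div_const 2).mul
      (((hasDerivAt_id m).const_add 1).log h₁.ne'))
  refine HasDerivAt.congr_deriv (f := curieWeissRate β h) hd ?_
  rw [artanh_eq_half_log (Ioo_subset_Icc_self hm), log_div h₁.ne' h₂.ne']
  simp only [id]
  field_simp
  ring

theorem strictMonoOn_artanh_sub_mul_add {β : ℝ} (hβ : β < 1) (h : ℝ) :
    StrictMonoOn (fun m => artanh m - β * (m + h)) (Ioo (-1) 1) := by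
  have hd : ∀ m ∈ Ioo (-1 : ℝ) 1,
      HasDerivAt (fun m => artanh m - β * (m + h)) ((1 - m ^ 2)⁻¹ - β * 1) m := fun m hm =>
    (hasDerivAt_artanh hm).sub (((hasDerivAt_id m).add_const h).const_mul β)
  refine strictMonoOn_of_hasDerivWithinAt_pos (f' := fun m => (1 - m ^ 2)⁻¹ - β * 1)
    (convex_Ioo _ _) (fun m hm => (hd m hm).continuousAt.continuousWithinAt)
    (fun m hm => ?_) (fun m hm => ?_)
  · rw [interior_Ioo] at hm ⊢
    exact (hd m hm).hasDerivWithinAt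
  · rw [interior_Ioo] at hm
    have hsq : 1 - m ^ 2 ∈ Ioc 0 1 := ⟨by nlinarith [hm.1, hm.2], by nlinarith⟩
    linarith [one_le_inv₀ hsq.1 |>.mpr hsq.2]

theorem curie_weiss_unique_minimizer_general
    (β h : ℝ) (hβ1 : β < 1)
    (i : ℝ → ℝ)
    (hi : ∀ m ∈ Ioo (-1 : ℝ) 1,
      i m = -((1 / 2) * β * m ^ 2 + β * h * m)
        + ((1 - m) / 2) * Real.log (1 - m) + ((1 + m) / 2) * Real.log (1 + m)) :
    ∃ m₀ ∈ Ioo (-1 : ℝ) 1,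
      (∀ m ∈ Ioo (-1 : ℝ) 1, m ≠ m₀ → i m₀ < i m) ∧
      m₀ = Real.tanh (β * (m₀ + h)) := by
  obtain ⟨m₀, hfix⟩ := exists_eq_tanh_mul_add β h
  have hm₀ : m₀ ∈ Ioo (-1 : ℝ) 1 := hfix ▸ ⟨neg_one_lt_tanh _, tanh_lt_one _⟩
  have hcrit : artanh m₀ - β * (m₀ + h) = 0 := by
    rw [sub_eq_zero, ← artanh_tanh (β * (m₀ + h)), ← hfix]
  refine ⟨m₀, hm₀, fun m hm hne => ?_, hfix⟩
  rw [hi m hm, hi m₀ hm₀]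
  exact (strictMonoOn_artanh_sub_mul_add hβ1 h).lt_of_hasDerivAt_eq_zero ordConnected_Ioo
    (fun x hx => hasDerivAt_curieWeissRate β h hx) hm₀ hm hcrit hne

/-- For `0 ≤ β < 1` and `h ∈ ℝ`, the Curie-Weiss rate function
`i(m) = -((1/2)βm² + βhm) + ((1-m)/2)log(1-m) + ((1+m)/2)log(1+m)` on `(-1,1)`
has a unique global minimizer `m₀`, which satisfies `m₀ = tanh(β(m₀+h))`. -/
theorem curie_weiss_unique_minimizer
    (β h : ℝ) (hβ0 : 0 ≤ β) (hβ1 : β < 1)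
    (i : ℝ → ℝ)
    (hi : ∀ m ∈ Ioo (-1 : ℝ) 1,
      i m = -((1 / 2) * β * m ^ 2 + β * h * m)
        + ((1 - m) / 2) * Real.log (1 - m) + ((1 + m) / 2) * Real.log (1 + m)) :
    ∃ m₀ ∈ Ioo (-1 : ℝ) 1,
      (∀ m ∈ Ioo (-1 : ℝ) 1, m ≠ m₀ → i m₀ < i m) ∧
      m₀ = Real.tanh (β * (m₀ + h)) :=
  curie_weiss_unique_minimizer_general β h hβ1 i hi
end

section
/- Suppose there is y₀ > 0 such that inf_{y≥y₀} λ^+(y) > sup_{y≥y₀} λ^-(y) and inf_{y≤-y₀} λ^-(y) > sup_{y≤-y₀} λ^+(y). Then with Ψ(y) = (1/a)∫₀^y (λ^+(η) - λ^-(η)) dη, the measure with density y ↦ exp(-Ψ(y)) with respect to Lebesgue measure on ℝ is finite: ∫_ℝ exp(-Ψ(y)) dy < ∞. -/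
/-!
Outside `[-y₀, y₀]` the derivative `Ψ' = (λ⁺ - λ⁻) / a` is bounded away from zero with the sign
of `y`, so `Ψ` grows at least linearly at `±∞` and `exp (-Ψ)` is dominated there by decaying
exponentials; on the compact middle piece it is continuous.
-/

open Set Real MeasureTheory

lemma mul_sub_le_intervalIntegral {f : ℝ → ℝ} {c u v : ℝ} (huv : u ≤ v)
    (hf : IntervalIntegrable f volume u v) (hc : ∀ x ∈ Icc u v, c ≤ f x) :
    c * (v - u) ≤ ∫ x in u..v, f x := by
  simpa [mul_comm] using intervalIntegral.integral_mono_on huv intervalIntegrable_const hf hc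

lemma integrableOn_exp_neg_of_sub_mul_le {Ψ : ℝ → ℝ} {s : Set ℝ} {b c : ℝ}
    (hs : MeasurableSet s) (hΨ : Measurable Ψ) (hb : IntegrableOn (fun y => exp (b * y)) s)
    (hle : ∀ y ∈ s, c - b * y ≤ Ψ y) :
    IntegrableOn (fun y => exp (-Ψ y)) s := by
  refine ((hb.const_mul (exp (-c))).mono' (hΨ.neg.exp.aestronglyMeasurable) ?_)
  filter_upwards [ae_restrict_mem hs] with y hy
  rw [norm_of_nonneg (exp_pos _).le, ← exp_add]
  exact exp_le_exp.2 (by linarith [hle y hy])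

theorem integrable_exp_neg_of_linear_growth {Ψ : ℝ → ℝ} (hΨ : Continuous Ψ) {L R kL kR : ℝ}
    (hkL : 0 < kL) (hkR : 0 < kR) (hleft : ∀ y ∈ Iic L, Ψ L + kL * (L - y) ≤ Ψ y)
    (hright : ∀ y ∈ Ioi R, Ψ R + kR * (y - R) ≤ Ψ y) :
    Integrable (fun y => exp (-Ψ y)) := by
  have hIic : IntegrableOn (fun y => exp (-Ψ y)) (Iic L) :=
    integrableOn_exp_neg_of_sub_mul_le measurableSet_Iic hΨ.measurable
      (c := Ψ L + kL * L) (integrableOn_exp_mul_Iic hkL L) fun y hy => by linarith [hleft y hy]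
  have hIoi : IntegrableOn (fun y => exp (-Ψ y)) (Ioi R) :=
    integrableOn_exp_neg_of_sub_mul_le measurableSet_Ioi hΨ.measurable
      (c := Ψ R - kR * R) (exp_neg_integrableOn_Ioi R hkR) fun y hy => by linarith [hright y hy]
  have hIcc : IntegrableOn (fun y => exp (-Ψ y)) (Icc L R) := hΨ.neg.rexp.integrableOn_Icc
  have hcover : (univ : Set ℝ) ⊆ Iic L ∪ Icc L R ∪ Ioi R := fun y _ => by
    rcases le_or_gt y L with hL | hL
    · exact .inl (.inl hL)
    rcases le_or_gt y R with hR | hR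
    · exact .inl (.inr ⟨hL.le, hR⟩)
    · exact .inr hR
  exact integrableOn_univ.1 (((hIic.union hIcc).union hIoi).mono_set hcover)

theorem integrable_exp_neg_primitive {f : ℝ → ℝ} (hf : Continuous f) (b : ℝ) {L R kL kR : ℝ}
    (hkL : 0 < kL) (hkR : 0 < kR) (hleft : ∀ x ∈ Iic L, f x ≤ -kL)
    (hright : ∀ x ∈ Ici R, kR ≤ f x) :
    Integrable (fun y => exp (-∫ x in b..y, f x)) := by
  have hint (u v : ℝ) : IntervalIntegrable f volume u v := hf.intervalIntegrable u v
  refine integrable_exp_neg_of_linear_growth (L := L) (R := R)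
    (intervalIntegral.continuous_primitive hint b) hkL hkR (fun y hy => ?_) (fun y hy => ?_)
  · have hneg : kL * (L - y) ≤ ∫ x in y..L, -f x :=
      mul_sub_le_intervalIntegral hy (hint y L).neg fun x hx => le_neg.1 (hleft x hx.2)
    rw [intervalIntegral.integral_neg, intervalIntegral.integral_symm, neg_neg] at hneg
    rw [← intervalIntegral.integral_add_adjacent_intervals (hint b L) (hint L y)]
    linarith
  · have hpos := mul_sub_le_intervalIntegral hy.le (hint R y) fun x hx => hright x hx.1
    rw [← intervalIntegral.integral_add_adjacent_intervals (hint b R) (hint R y)]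
    linarith

theorem zigzag_invariant_measure_finite_general
    (a : ℝ) (ha : 0 < a)
    (lamp lamm : ℝ → ℝ)
    (hcontp : Continuous lamp) (hcontm : Continuous lamm)
    (y₀ : ℝ)
    (hplus : ∃ c₁ c₂ : ℝ, c₁ < c₂ ∧ (∀ y, y₀ ≤ y → lamm y ≤ c₁) ∧
      (∀ y, y₀ ≤ y → c₂ ≤ lamp y))
    (hminus : ∃ c₁ c₂ : ℝ, c₁ < c₂ ∧ (∀ y, y ≤ -y₀ → lamp y ≤ c₁) ∧
      (∀ y, y ≤ -y₀ → c₂ ≤ lamm y))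
    (Ψ : ℝ → ℝ)
    (hΨ : ∀ y, Ψ y = (1 / a) * ∫ η in (0 : ℝ)..y, (lamp η - lamm η)) :
    Integrable (fun y => Real.exp (-Ψ y)) (volume : Measure ℝ) := by
  obtain ⟨c₁, c₂, hc, hmm_right, hmp_right⟩ := hplus
  obtain ⟨d₁, d₂, hd, hmp_left, hmm_left⟩ := hminus
  have hΨ_primitive : Ψ = fun y => ∫ η in (0 : ℝ)..y, a⁻¹ * (lamp η - lamm η) := by
    funext y
    rw [hΨ, intervalIntegral.integral_const_mul, one_div]
  rw [hΨ_primitive]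
  have ha_inv : 0 ≤ a⁻¹ := inv_nonneg.2 ha.le
  refine integrable_exp_neg_primitive (by fun_prop) 0
    (L := -y₀) (R := y₀) (div_pos (sub_pos.2 hd) ha) (div_pos (sub_pos.2 hc) ha)
    (fun x hx => ?_) (fun x hx => ?_)
  · rw [div_eq_inv_mul, ← mul_neg]
    exact mul_le_mul_of_nonneg_left (by linarith [hmp_left x hx, hmm_left x hx]) ha_inv
  · rw [div_eq_inv_mul]
    exact mul_le_mul_of_nonneg_left (by linarith [hmp_right x hx, hmm_right x hx]) ha_inv

/-- Suppose there is `y₀ > 0` with `inf_{y≥y₀} λ⁺(y) > sup_{y≥y₀} λ⁻(y)` and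
`inf_{y≤-y₀} λ⁻(y) > sup_{y≤-y₀} λ⁺(y)` (encoded by separating constants
`c₁ < c₂`).  Then with `Ψ(y) = (1/a)∫₀ʸ (λ⁺(η) - λ⁻(η)) dη`, the measure with
density `y ↦ exp(-Ψ(y))` with respect to Lebesgue measure is finite, i.e.
`y ↦ exp(-Ψ(y))` is integrable on `ℝ`. -/
theorem zigzag_invariant_measure_finite
    (a : ℝ) (ha : 0 < a)
    (lamp lamm : ℝ → ℝ)
    (hcontp : Continuous lamp) (hcontm : Continuous lamm)
    (hnnp : ∀ y, 0 ≤ lamp y) (hnnm : ∀ y, 0 ≤ lamm y)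
    (y₀ : ℝ) (hy₀ : 0 < y₀)
    (hplus : ∃ c₁ c₂ : ℝ, c₁ < c₂ ∧ (∀ y, y₀ ≤ y → lamm y ≤ c₁) ∧
      (∀ y, y₀ ≤ y → c₂ ≤ lamp y))
    (hminus : ∃ c₁ c₂ : ℝ, c₁ < c₂ ∧ (∀ y, y ≤ -y₀ → lamp y ≤ c₁) ∧
      (∀ y, y ≤ -y₀ → c₂ ≤ lamm y))
    (Ψ : ℝ → ℝ)
    (hΨ : ∀ y, Ψ y = (1 / a) * ∫ η in (0 : ℝ)..y, (lamp η - lamm η)) :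
    Integrable (fun y => Real.exp (-Ψ y)) (volume : Measure ℝ) :=
  zigzag_invariant_measure_finite_general a ha lamp lamm hcontp hcontm y₀ hplus hminus Ψ hΨ
end

section
/- For any measure μ on ℝ × {-1,+1} with density (y,j) ↦ exp(-Ψ(y)) with respect to Leb ⊗ (δ_{-1}+δ_{+1}), where Ψ is C¹, bounded below, and satisfies aΨ'(y) = λ^+(y) - λ^-(y), and for any φ: ℝ×{-1,+1} → ℝ with φ(·,±1) ∈ C¹ vanishing at infinity along with the stated combination, one has ∑_{j=±1} ∫_ℝ [a j ∂φ/∂y(y,j) + λ(y,j)(φ(y,-j) - φ(y,j))] exp(-Ψ(y)) dy = 0. -/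
open Set Real MeasureTheory Filter

/-!
The generator integrand summed over `j = ±1` is the derivative of the flux
`a (φ(·,+1) - φ(·,-1)) e^{-Ψ}`: differentiating `e^{-Ψ}` produces `-Ψ' e^{-Ψ}`, and the
balance condition `a Ψ' = λ⁺ - λ⁻` turns this into exactly the jump terms. Since `Ψ` is bounded
below and `φ` vanishes at infinity, the flux vanishes at `±∞`, so its derivative integrates to `0`.
-/

noncomputable def zigzagFlux (a : ℝ) (phip phim Ψ : ℝ → ℝ) (y : ℝ) : ℝ :=
  a * ((phip y - phim y) * exp (-Ψ y))

theorem hasDerivAt_zigzagFlux {a : ℝ} {lamp lamm phip phim Ψ : ℝ → ℝ} {p' m' ψ' y : ℝ}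
    (hp : HasDerivAt phip p' y) (hm : HasDerivAt phim m' y) (hΨ : HasDerivAt Ψ ψ' y)
    (hbalance : a * ψ' = lamp y - lamm y) :
    HasDerivAt (zigzagFlux a phip phim Ψ)
      ((a * p' + lamp y * (phim y - phip y)) * exp (-Ψ y) +
        (a * (-1) * m' + lamm y * (phip y - phim y)) * exp (-Ψ y)) y := by
  have hexp : HasDerivAt (fun y => exp (-Ψ y)) (exp (-Ψ y) * -ψ') y := hΨ.neg.exp
  refine (((hp.sub hm).mul hexp).const_mul a).congr_deriv ?_
  simp only [Pi.sub_apply]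
  linear_combination -(phip y - phim y) * exp (-Ψ y) * hbalance

theorem Filter.Tendsto.mul_exp_neg_of_bddBelow {ι : Type*} {l : Filter ι} {g Ψ : ι → ℝ}
    (hg : Tendsto g l (nhds 0)) (hΨ : ∃ C, ∀ y, C ≤ Ψ y) :
    Tendsto (fun y => g y * Real.exp (-Ψ y)) l (nhds 0) := by
  obtain ⟨C, hC⟩ := hΨ
  refine hg.zero_mul_isBoundedUnder_le
    ⟨Real.exp (-C), eventually_map.2 (Eventually.of_forall ?_)⟩
  intro y
  simpa [Real.norm_eq_abs, abs_of_pos (exp_pos _)] using hC y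

theorem tendsto_zigzagFlux {ι : Type*} {l : Filter ι} {a : ℝ} {phip phim Ψ : ι → ℝ}
    (hphip : Tendsto phip l (nhds 0)) (hphim : Tendsto phim l (nhds 0))
    (hΨ : ∃ C, ∀ y, C ≤ Ψ y) :
    Tendsto (fun y => a * ((phip y - phim y) * exp (-Ψ y))) l (nhds 0) := by
  have hdiff : Tendsto (fun y => phip y - phim y) l (nhds 0) := by
    simpa using hphip.sub hphim
  simpa using (hdiff.mul_exp_neg_of_bddBelow hΨ).const_mul a

theorem zigzag_generator_integral_zero_general
    (a : ℝ)
    (lamp lamm : ℝ → ℝ)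
    (Ψ : ℝ → ℝ) (hΨdiff : ContDiff ℝ 1 Ψ)
    (hΨbdd : ∃ C : ℝ, ∀ y, C ≤ Ψ y)
    (hΨ' : ∀ y, a * deriv Ψ y = lamp y - lamm y)
    (phip phim : ℝ → ℝ)
    (hphip : ContDiff ℝ 1 phip) (hphim : ContDiff ℝ 1 phim)
    (hphip0 : Tendsto phip (cocompact ℝ) (nhds 0))
    (hphim0 : Tendsto phim (cocompact ℝ) (nhds 0))
    (hint_p : Integrable (fun y =>
      (a * deriv phip y + lamp y * (phim y - phip y)) * Real.exp (-Ψ y)) volume)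
    (hint_m : Integrable (fun y =>
      (a * (-1) * deriv phim y + lamm y * (phip y - phim y)) * Real.exp (-Ψ y)) volume) :
    (∫ y, (a * deriv phip y + lamp y * (phim y - phip y)) * Real.exp (-Ψ y)) +
    (∫ y, (a * (-1) * deriv phim y + lamm y * (phip y - phim y)) * Real.exp (-Ψ y))
      = 0 := by
  have hderiv (y : ℝ) := hasDerivAt_zigzagFlux
    (hphip.differentiable one_ne_zero y).hasDerivAt
    (hphim.differentiable one_ne_zero y).hasDerivAt
    (hΨdiff.differentiable one_ne_zero y).hasDerivAt (hΨ' y)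
  have hflux : Tendsto (zigzagFlux a phip phim Ψ) (cocompact ℝ) (nhds 0) :=
    tendsto_zigzagFlux hphip0 hphim0 hΨbdd
  rw [← integral_add hint_p hint_m, integral_of_hasDerivAt_of_tendsto hderiv (hint_p.add hint_m)
    (hflux.mono_left atBot_le_cocompact) (hflux.mono_left atTop_le_cocompact), sub_zero]

/-- For a measure with density `exp(-Ψ)` (Ψ being `C¹`, bounded below, satisfying
`aΨ' = λ⁺ - λ⁻`) with respect to `Leb ⊗ (δ₋₁ + δ₊₁)`, and any `φ` with
`φ(·,±1) ∈ C¹` vanishing at infinity (with the relevant integrability), the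
integral of the zig-zag generator vanishes:
`∑_{j=±1} ∫ [a j ∂φ/∂y(y,j) + λ(y,j)(φ(y,-j)-φ(y,j))] e^{-Ψ(y)} dy = 0`. -/
theorem zigzag_generator_integral_zero
    (a : ℝ) (ha : 0 < a)
    (lamp lamm : ℝ → ℝ)
    (hcontp : Continuous lamp) (hcontm : Continuous lamm)
    (hnnp : ∀ y, 0 ≤ lamp y) (hnnm : ∀ y, 0 ≤ lamm y)
    (Ψ : ℝ → ℝ) (hΨdiff : ContDiff ℝ 1 Ψ)
    (hΨbdd : ∃ C : ℝ, ∀ y, C ≤ Ψ y)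
    (hΨ' : ∀ y, a * deriv Ψ y = lamp y - lamm y)
    (phip phim : ℝ → ℝ)
    (hphip : ContDiff ℝ 1 phip) (hphim : ContDiff ℝ 1 phim)
    (hphip0 : Tendsto phip (cocompact ℝ) (nhds 0))
    (hphim0 : Tendsto phim (cocompact ℝ) (nhds 0))
    (hint_p : Integrable (fun y =>
      (a * deriv phip y + lamp y * (phim y - phip y)) * Real.exp (-Ψ y)) volume)
    (hint_m : Integrable (fun y =>
      (a * (-1) * deriv phim y + lamm y * (phip y - phim y)) * Real.exp (-Ψ y)) volume)
    (hint_dp : Integrable (fun y => deriv phip y * Real.exp (-Ψ y)) volume)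
    (hint_dm : Integrable (fun y => deriv phim y * Real.exp (-Ψ y)) volume)
    (hint_lpp : Integrable (fun y => lamp y * phip y * Real.exp (-Ψ y)) volume)
    (hint_lpm : Integrable (fun y => lamp y * phim y * Real.exp (-Ψ y)) volume)
    (hint_lmp : Integrable (fun y => lamm y * phip y * Real.exp (-Ψ y)) volume)
    (hint_lmm : Integrable (fun y => lamm y * phim y * Real.exp (-Ψ y)) volume) :
    (∫ y, (a * deriv phip y + lamp y * (phim y - phip y)) * Real.exp (-Ψ y)) +
    (∫ y, (a * (-1) * deriv phim y + lamm y * (phip y - phim y)) * Real.exp (-Ψ y))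
      = 0 :=
  zigzag_generator_integral_zero_general a lamp lamm Ψ hΨdiff hΨbdd hΨ' phip phim hphip hphim hphip0
    hphim0 hint_p hint_m
end

section
/- The zig-zag semigroup is not strong Feller: with j = +1, t > 0, A = [y + at, ∞), and φ = 1_A(·) (independent of the direction component), the function z ↦ P(t)φ(z,+1) = P_{z,+1}(Y(t) ∈ A) is discontinuous at z = y, since P_{y,+1}(Y(t) ∈ A) ≥ P_{y,+1}(T₁ > t) > 0 while P_{z,+1}(Y(t) ∈ A) = 0 for all z < y. -/
open Set Real MeasureTheory

/-! Started from `(z, +1)` with `z < y`, the process cannot reach `y + at` by time `t`, while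
started from `(y, +1)` it is exactly at `y + at` whenever it has not switched before `t`.
So `z ↦ P_{z,+1}(Y(t) ≥ y + at)` vanishes to the left of `y` but not at `y`. -/

lemma setOf_add_le_eq_empty_of_abs_sub_le {Ω : Type*} {X : Ω → ℝ} {z y c : ℝ}
    (hX : ∀ ω, |X ω - z| ≤ c) (hz : z < y) : {ω | y + c ≤ X ω} = ∅ :=
  eq_empty_of_forall_notMem fun ω (hω : y + c ≤ X ω) => by
    linarith [(abs_le.mp (hX ω)).2]

lemma not_continuousAt_of_eq_zero_on_Iio {f : ℝ → ℝ} {y : ℝ} (hy : f y ≠ 0)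
    (hf : ∀ z < y, f z = 0) : ¬ ContinuousAt f y := fun hcont => by
  have hleft : Filter.Tendsto f (nhdsWithin y (Iio y)) (nhds 0) :=
    tendsto_const_nhds.congr' (eventually_nhdsWithin_of_forall fun z hz => (hf z hz).symm)
  exact hy (tendsto_nhds_unique (hcont.tendsto.mono_left nhdsWithin_le_nhds) hleft)

theorem zigzag_not_strong_feller_general
    {Ω : Type*} [MeasurableSpace Ω]
    (ν : ℝ → Measure Ω) (hprob : ∀ z, IsProbabilityMeasure (ν z))
    (a t y : ℝ)
    (Yt : ℝ → Ω → ℝ) (T₁ : ℝ → Ω → ℝ)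
    (hspeed : ∀ z ω, |Yt z ω - z| ≤ a * t)
    (hlinear : ∀ z ω, t < T₁ z ω → Yt z ω = z + a * t)
    (hpos : ∀ z, 0 < ν z {ω | t < T₁ z ω}) :
    0 < ν y {ω | y + a * t ≤ Yt y ω} ∧
    (∀ z, z < y → ν z {ω | y + a * t ≤ Yt z ω} = 0) ∧
    ¬ ContinuousAt (fun z => (ν z {ω | y + a * t ≤ Yt z ω}).toReal) y := by
  have hpos_y : 0 < ν y {ω | y + a * t ≤ Yt y ω} :=
    (hpos y).trans_le (measure_mono fun ω hω => (hlinear y ω hω).ge)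
  have hzero : ∀ z, z < y → ν z {ω | y + a * t ≤ Yt z ω} = 0 := fun z hz => by
    rw [setOf_add_le_eq_empty_of_abs_sub_le (hspeed z) hz, measure_empty]
  refine ⟨hpos_y, hzero, not_continuousAt_of_eq_zero_on_Iio ?_ fun z hz => ?_⟩
  · have := hprob y
    exact (ENNReal.toReal_pos hpos_y.ne' (measure_ne_top _ _)).ne'
  · simp only [hzero z hz, ENNReal.toReal_zero]

/-- The zig-zag semigroup is not strong Feller: with direction `+1`, `t > 0` and
`A = [y + at, ∞)`, `φ = 1_A`, the map `z ↦ P(t)φ(z,+1) = P_{z,+1}(Y(t) ∈ A)` is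
positive at `z = y` (since `P_{y,+1}(T₁ > t) > 0`), vanishes for `z < y`
(since `|Y(t) - z| ≤ at`), and hence is discontinuous at `z = y`.
Here `ν z` is the law of the process started at `(z,+1)`, `Yt z` the position at
time `t` and `T₁ z` the first switching time. -/
theorem zigzag_not_strong_feller
    {Ω : Type*} [MeasurableSpace Ω]
    (ν : ℝ → Measure Ω) (hprob : ∀ z, IsProbabilityMeasure (ν z))
    (a t y : ℝ) (ha : 0 < a) (ht : 0 < t)
    (Yt : ℝ → Ω → ℝ) (T₁ : ℝ → Ω → ℝ)
    (hspeed : ∀ z ω, |Yt z ω - z| ≤ a * t)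
    (hlinear : ∀ z ω, t < T₁ z ω → Yt z ω = z + a * t)
    (hpos : ∀ z, 0 < ν z {ω | t < T₁ z ω}) :
    0 < ν y {ω | y + a * t ≤ Yt y ω} ∧
    (∀ z, z < y → ν z {ω | y + a * t ≤ Yt z ω} = 0) ∧
    ¬ ContinuousAt (fun z => (ν z {ω | y + a * t ≤ Yt z ω}).toReal) y :=
  zigzag_not_strong_feller_general ν hprob a t y Yt T₁ hspeed hlinear hpos
end

section
/- Under the assumption that there is y₀ > 0 with M⁺ := inf_{y≥y₀}λ⁺(y) > m⁺ := sup_{y≥y₀}λ⁻(y) and M⁻ := inf_{y≤-y₀}λ⁻(y) > m⁻ := sup_{y≤-y₀}λ⁺(y), there exist constants β⁺, β⁻ > 0 and α⁺, α⁻ > 0 such that α⁺ ∈ (m⁺(e^{2β⁺}-1), M⁺(1-e^{-2β⁺})) and α⁻ ∈ (m⁻(e^{2β⁻}-1), M⁻(1-e^{-2β⁻})); consequently, with V(y,+1) = exp(α⁺y + β⁺) and V(y,-1) = exp(α⁺y - β⁺) for y ≥ y₀, the generator L of the zig-zag process with unit speed satisfies LV(y,+1) = (α⁺ - λ⁺(y)(1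 - e^{-2β⁺}))V(y,+1) < -c⁺V(y,+1) and LV(y,-1) = (-α⁺ + λ⁻(y)(e^{2β⁺}-1))V(y,-1) < -c⁺V(y,-1) for some c⁺ > 0 and all y ≥ y₀. -/
/-!
Writing `t = e^{2β}`, the window `m(e^{2β} - 1) < α < M(1 - e^{-2β})` is nonempty exactly when
`m t < M`, so any `t > 1` with `m t < M` (for instance `t = 2M / (M + m)`) gives admissible `β`
and `α`.
On `y ≥ y₀` the rates satisfy `λ⁺ ≥ M⁺` and `λ⁻ ≤ m⁺`, which turns the two strict inequalities
defining the window into a uniform negative drift of `LV / V`.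
-/

open Set Real

lemma mul_sub_one_lt_mul_one_sub_inv {m M t : ℝ} (ht : 1 < t) (hmt : m * t < M) :
    m * (t - 1) < M * (1 - t⁻¹) := by
  have ht0 : 0 < t := by linarith
  rw [show M * (1 - t⁻¹) = M * (t - 1) / t by field_simp, lt_div_iff₀ ht0]
  nlinarith

lemma exists_pos_mem_Ioo_mul_exp {m M : ℝ} (hm : 0 ≤ m) (hmM : m < M) :
    ∃ β α : ℝ, 0 < β ∧ 0 < α ∧
      α ∈ Ioo (m * (exp (2 * β) - 1)) (M * (1 - exp (-2 * β))) := by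
  have hMm : 0 < M + m := by linarith
  set t := 2 * M / (M + m)
  have ht : 1 < t := (one_lt_div hMm).2 (by linarith)
  have hmt : m * t < M := by
    rw [mul_div_assoc', div_lt_iff₀ hMm]
    nlinarith
  have hexp : exp (2 * (log t / 2)) = t := by
    rw [mul_div_cancel₀ _ two_ne_zero, exp_log (by linarith)]
  have hexp_neg : exp (-2 * (log t / 2)) = t⁻¹ := by
    rw [neg_mul, exp_neg, hexp]
  obtain ⟨α, hα⟩ := exists_between (mul_sub_one_lt_mul_one_sub_inv ht hmt)
  have hlow : 0 ≤ m * (t - 1) := mul_nonneg hm (by linarith)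
  exact ⟨log t / 2, α, div_pos (log_pos ht) two_pos, hlow.trans_lt hα.1, by
    rwa [hexp, hexp_neg]⟩

section Generator

variable (r α β y : ℝ)

lemma zigzag_generator_exp_add :
    deriv (fun z => exp (α * z + β)) y + r * (exp (α * y - β) - exp (α * y + β))
      = (α - r * (1 - exp (-2 * β))) * exp (α * y + β) := by
  have hflip : exp (α * y - β) = exp (-2 * β) * exp (α * y + β) := by
    rw [← exp_add]; ring_nf
  have hderiv : deriv (fun z => exp (α * z + β)) y = exp (α * y + β) * α := by
    simpa using (((hasDerivAt_id' y).const_mul α).add_const β).exp.deriv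
  rw [hderiv, hflip]
  ring

lemma zigzag_generator_exp_sub :
    -deriv (fun z => exp (α * z - β)) y + r * (exp (α * y + β) - exp (α * y - β))
      = (-α + r * (exp (2 * β) - 1)) * exp (α * y - β) := by
  have hflip : exp (α * y + β) = exp (2 * β) * exp (α * y - β) := by
    rw [← exp_add]; ring_nf
  have hderiv : deriv (fun z => exp (α * z - β)) y = exp (α * y - β) * α := by
    simpa using (((hasDerivAt_id' y).const_mul α).sub_const β).exp.deriv
  rw [hderiv, hflip]
  ring

end Generator

section Drift

variable {r M m α β c v : ℝ}

lemma drift_forward_lt (hβ : 0 < β) (hr : M ≤ r) (hc : c < M * (1 - exp (-2 * β)) - α)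
    (hv : 0 < v) : (α - r * (1 - exp (-2 * β))) * v < -c * v := by
  have hfactor : 0 < 1 - exp (-2 * β) := sub_pos.2 (exp_lt_one_iff.2 (by linarith))
  have := mul_le_mul_of_nonneg_right hr hfactor.le
  exact mul_lt_mul_of_pos_right (by linarith) hv

lemma drift_backward_lt (hβ : 0 < β) (hr : r ≤ m) (hc : c < α - m * (exp (2 * β) - 1))
    (hv : 0 < v) : (-α + r * (exp (2 * β) - 1)) * v < -c * v := by
  have hfactor : 0 < exp (2 * β) - 1 := sub_pos.2 (one_lt_exp_iff.2 (by linarith))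
  have := mul_le_mul_of_nonneg_right hr hfactor.le
  exact mul_lt_mul_of_pos_right (by linarith) hv

end Drift

theorem zigzag_foster_lyapunov_general
    (lamp lamm : ℝ → ℝ)
    (hnnp : ∀ y, 0 ≤ lamp y) (hnnm : ∀ y, 0 ≤ lamm y)
    (y₀ : ℝ)
    (hba_p : BddAbove (lamm '' Ici y₀))
    (hplus : sSup (lamm '' Ici y₀) < sInf (lamp '' Ici y₀))
    (hminus : sSup (lamp '' Iic (-y₀)) < sInf (lamm '' Iic (-y₀))) :
    ∃ βp βm αp αm : ℝ, 0 < βp ∧ 0 < βm ∧ 0 < αp ∧ 0 < αm ∧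
      αp ∈ Ioo (sSup (lamm '' Ici y₀) * (Real.exp (2 * βp) - 1))
               (sInf (lamp '' Ici y₀) * (1 - Real.exp (-2 * βp))) ∧
      αm ∈ Ioo (sSup (lamp '' Iic (-y₀)) * (Real.exp (2 * βm) - 1))
               (sInf (lamm '' Iic (-y₀)) * (1 - Real.exp (-2 * βm))) ∧
      ∃ cp : ℝ, 0 < cp ∧ ∀ y : ℝ, y₀ ≤ y →
        (deriv (fun z => Real.exp (αp * z + βp)) y
            + lamp y * (Real.exp (αp * y - βp) - Real.exp (αp * y + βp))
          = (αp - lamp y * (1 - Real.exp (-2 * βp))) * Real.exp (αp * y + βp)) ∧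
        (-(deriv (fun z => Real.exp (αp * z - βp)) y)
            + lamm y * (Real.exp (αp * y + βp) - Real.exp (αp * y - βp))
          = (-αp + lamm y * (Real.exp (2 * βp) - 1)) * Real.exp (αp * y - βp)) ∧
        (αp - lamp y * (1 - Real.exp (-2 * βp))) * Real.exp (αp * y + βp)
          < -cp * Real.exp (αp * y + βp) ∧
        (-αp + lamm y * (Real.exp (2 * βp) - 1)) * Real.exp (αp * y - βp)
          < -cp * Real.exp (αp * y - βp) := by
  obtain ⟨βp, αp, hβp, hαp, hαp_mem⟩ := exists_pos_mem_Ioo_mul_exp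
    (Real.sSup_nonneg (forall_mem_image.2 fun y _ => hnnm y)) hplus
  obtain ⟨βm, αm, hβm, hαm, hαm_mem⟩ := exists_pos_mem_Ioo_mul_exp
    (Real.sSup_nonneg (forall_mem_image.2 fun y _ => hnnp y)) hminus
  obtain ⟨cp, hcp, hcp_lt⟩ :=
    exists_between (lt_min (sub_pos.2 hαp_mem.2) (sub_pos.2 hαp_mem.1))
  refine ⟨βp, βm, αp, αm, hβp, hβm, hαp, hαm, hαp_mem, hαm_mem, cp, hcp, fun y hy =>
    ⟨zigzag_generator_exp_add _ _ _ _, zigzag_generator_exp_sub _ _ _ _, ?_, ?_⟩⟩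
  · have hMp : sInf (lamp '' Ici y₀) ≤ lamp y :=
      csInf_le ⟨0, forall_mem_image.2 fun z _ => hnnp z⟩ (mem_image_of_mem _ hy)
    exact drift_forward_lt hβp hMp (lt_min_iff.1 hcp_lt).1 (exp_pos _)
  · have hmp : lamm y ≤ sSup (lamm '' Ici y₀) := le_csSup hba_p (mem_image_of_mem _ hy)
    exact drift_backward_lt hβp hmp (lt_min_iff.1 hcp_lt).2 (exp_pos _)

/-- Under the assumption `inf_{y≥y₀} λ⁺ > sup_{y≥y₀} λ⁻` and
`inf_{y≤-y₀} λ⁻ > sup_{y≤-y₀} λ⁺`, there exist `β⁺, β⁻ > 0` and `α⁺, α⁻ > 0`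
with `α± ∈ (m±(e^{2β±}-1), M±(1-e^{-2β±}))`, and consequently the Lyapunov
function `V(y,+1) = exp(α⁺y + β⁺)`, `V(y,-1) = exp(α⁺y - β⁺)` on `y ≥ y₀`
satisfies the generator identities and the drift bound `LV < -c⁺ V` for some
`c⁺ > 0` on `y ≥ y₀` (with unit speed). -/
theorem zigzag_foster_lyapunov
    (lamp lamm : ℝ → ℝ)
    (hcontp : Continuous lamp) (hcontm : Continuous lamm)
    (hnnp : ∀ y, 0 ≤ lamp y) (hnnm : ∀ y, 0 ≤ lamm y)
    (y₀ : ℝ) (hy₀ : 0 < y₀)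
    (hba_p : BddAbove (lamm '' Ici y₀)) (hba_m : BddAbove (lamp '' Iic (-y₀)))
    (hplus : sSup (lamm '' Ici y₀) < sInf (lamp '' Ici y₀))
    (hminus : sSup (lamp '' Iic (-y₀)) < sInf (lamm '' Iic (-y₀))) :
    ∃ βp βm αp αm : ℝ, 0 < βp ∧ 0 < βm ∧ 0 < αp ∧ 0 < αm ∧
      αp ∈ Ioo (sSup (lamm '' Ici y₀) * (Real.exp (2 * βp) - 1))
               (sInf (lamp '' Ici y₀) * (1 - Real.exp (-2 * βp))) ∧
      αm ∈ Ioo (sSup (lamp '' Iic (-y₀)) * (Real.exp (2 * βm) - 1))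
               (sInf (lamm '' Iic (-y₀)) * (1 - Real.exp (-2 * βm))) ∧
      ∃ cp : ℝ, 0 < cp ∧ ∀ y : ℝ, y₀ ≤ y →
        (deriv (fun z => Real.exp (αp * z + βp)) y
            + lamp y * (Real.exp (αp * y - βp) - Real.exp (αp * y + βp))
          = (αp - lamp y * (1 - Real.exp (-2 * βp))) * Real.exp (αp * y + βp)) ∧
        (-(deriv (fun z => Real.exp (αp * z - βp)) y)
            + lamm y * (Real.exp (αp * y + βp) - Real.exp (αp * y - βp))
          = (-αp + lamm y * (Real.exp (2 * βp) - 1)) * Real.exp (αp * y - βp)) ∧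
        (αp - lamp y * (1 - Real.exp (-2 * βp))) * Real.exp (αp * y + βp)
          < -cp * Real.exp (αp * y + βp) ∧
        (-αp + lamm y * (Real.exp (2 * βp) - 1)) * Real.exp (αp * y - βp)
          < -cp * Real.exp (αp * y - βp) :=
  zigzag_foster_lyapunov_general lamp lamm hnnp hnnm y₀ hba_p hplus hminus
end
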